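/- arXiv:1812.10954 — 5 statements merged into one kernel-verified Lean document; each statement's English description precedes it below -/
import Mathlib

section
/- Let p be a real polynomial of degree k ≥ 2, q its associated symmetric polynomial, and G(x,y) = (y, (y·q(x,y) − p(y))/q(x,y)) the secant map in its extended form. At every point (x,y) ∈ ℝ² with q(x,y) ≠ 0, G is differentiable and its total derivative is the linear map with matrix [[0, 1], [A(x,y), B(x,y)]], where A(x,y) = p(y)·(∂q/∂x)(x,y)/q(x,y)² and B(x,y) = p(x)·(∂q/∂y)(x,y)/q(x,y)². -/
open Polynomial Filter Topology

/-- The symmetric polynomial `q(x,y) = Σ_{j=1}^k a_j Σ_{i=0}^{j-1} x^i y^{j-1-i}`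
associated to a real polynomial `p(x) = Σ_{j=0}^k a_j x^j`;
it satisfies `p(x) - p(y) = (x - y) * secQ p x y`. -/
noncomputable def secQ (p : Polynomial ℝ) (x y : ℝ) : ℝ :=
  ∑ j ∈ Finset.range (p.natDegree + 1),
    p.coeff j * ∑ i ∈ Finset.range j, x ^ i * y ^ (j - 1 - i)

/-- The secant map in extended form: `G(x,y) = (y, (y·q(x,y) − p(y))/q(x,y))`. -/
noncomputable def secG (p : Polynomial ℝ) (z : ℝ × ℝ) : ℝ × ℝ :=
  (z.2, (z.2 * secQ p z.1 z.2 - Polynomial.eval z.2 p) / secQ p z.1 z.2)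

/-!
The second component of `secG p` is a quotient of smooth functions, so the quotient rule gives its
derivative in terms of the partial derivatives of `q = secQ p`. The entries then collapse to the
stated ones thanks to the identity `(x - y) q(x,y) = p(x) - p(y)` and its `y`-derivative
`q(x,y) - (x - y) ∂q/∂y(x,y) = p'(y)`.
-/

open ContinuousLinearMap

section Calculus

variable {𝕜 : Type*} [NontriviallyNormedField 𝕜]

theorem HasFDerivAt.fun_div {E : Type*} [NormedAddCommGroup E] [NormedSpace 𝕜 E]
    {f g : E → 𝕜} {f' g' : E →L[𝕜] 𝕜} {x : E} (hf : HasFDerivAt f f' x)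
    (hg : HasFDerivAt g g' x) (hx : g x ≠ 0) :
    HasFDerivAt (fun z => f z / g z) ((g x ^ 2)⁻¹ • (g x • f' - f x • g')) x := by
  have hinv : HasFDerivAt (fun z => (g z)⁻¹) (-(g x ^ 2)⁻¹ • g') x :=
    (hasDerivAt_inv hx).comp_hasFDerivAt x hg
  simp only [div_eq_mul_inv]
  refine (hf.fun_mul hinv).congr_fderiv ?_
  ext v
  simp only [add_apply, smul_apply, smul_eq_mul, neg_mul, mul_neg, sub_apply]
  field_simp
  ring

theorem HasFDerivAt.eq_deriv_smul_fst_add_deriv_smul_snd {f : 𝕜 × 𝕜 → 𝕜}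
    {L : 𝕜 × 𝕜 →L[𝕜] 𝕜} {x y : 𝕜} (h : HasFDerivAt f L (x, y)) :
    L = deriv (fun t => f (t, y)) x • fst 𝕜 𝕜 𝕜 + deriv (fun t => f (x, t)) y • snd 𝕜 𝕜 𝕜 := by
  have hx := (h.comp_hasDerivAt x ((hasDerivAt_id x).prodMk (hasDerivAt_const x y))).deriv
  have hy := (h.comp_hasDerivAt y ((hasDerivAt_const y x).prodMk (hasDerivAt_id y))).deriv
  ext <;> simp_all [Function.comp_def]

end Calculus

theorem sub_mul_secQ (p : Polynomial ℝ) (x y : ℝ) :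
    (x - y) * secQ p x y = p.eval x - p.eval y := by
  rw [eval_eq_sum_range, eval_eq_sum_range, ← Finset.sum_sub_distrib, secQ, Finset.mul_sum]
  refine Finset.sum_congr rfl fun j _ => ?_
  rw [← mul_sub, mul_left_comm, mul_comm (x - y), geom_sum₂_mul]

theorem differentiable_secQ (p : Polynomial ℝ) :
    Differentiable ℝ (fun z : ℝ × ℝ => secQ p z.1 z.2) := by
  unfold secQ
  fun_prop

theorem hasFDerivAt_secQ (p : Polynomial ℝ) (x y : ℝ) :
    HasFDerivAt (fun z : ℝ × ℝ => secQ p z.1 z.2)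
      (deriv (fun t => secQ p t y) x • fst ℝ ℝ ℝ + deriv (fun t => secQ p x t) y • snd ℝ ℝ ℝ)
      (x, y) :=
  have h := (differentiable_secQ p (x, y)).hasFDerivAt
  h.congr_fderiv h.eq_deriv_smul_fst_add_deriv_smul_snd

theorem secQ_sub_mul_deriv_secQ_right (p : Polynomial ℝ) (x y : ℝ) :
    secQ p x y - (x - y) * deriv (fun t => secQ p x t) y = p.derivative.eval y := by
  have hq : HasDerivAt (fun t => secQ p x t) (deriv (fun t => secQ p x t) y) y :=
    ((differentiable_secQ p).comp (differentiable_const x |>.prodMk differentiable_id) y).hasDerivAt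
  have h := ((hasDerivAt_id' y).const_sub x).fun_mul hq
  simp only [sub_mul_secQ] at h
  linarith [h.unique ((p.hasDerivAt y).const_sub _)]

theorem secant_map_fderiv_general (p : Polynomial ℝ) (x y : ℝ)
    (hq : secQ p x y ≠ 0) :
    HasFDerivAt (secG p)
      ((ContinuousLinearMap.snd ℝ ℝ ℝ).prod
        ((p.eval y * deriv (fun t => secQ p t y) x / (secQ p x y) ^ 2) •
            ContinuousLinearMap.fst ℝ ℝ ℝ +
          (p.eval x * deriv (fun t => secQ p x t) y / (secQ p x y) ^ 2) •
            ContinuousLinearMap.snd ℝ ℝ ℝ))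
      (x, y) := by
  have hQ := hasFDerivAt_secQ p x y
  have hnum :=
    (hasFDerivAt_snd.mul hQ).sub ((p.hasDerivAt y).comp_hasFDerivAt (x, y) hasFDerivAt_snd)
  refine (hasFDerivAt_snd.prodMk (hnum.fun_div hQ hq)).congr_fderiv ?_
  have hpx := sub_mul_secQ p x y
  have hpy := secQ_sub_mul_deriv_secQ_right p x y
  ext
  all_goals
    simp only [smul_add, Pi.sub_apply, Pi.mul_apply, Function.comp_apply, comp_apply, inl_apply,
      inr_apply, ContinuousLinearMap.prod_apply, coe_snd', coe_fst', smul_apply, sub_apply,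
      add_apply, smul_eq_mul, mul_one, mul_zero, add_zero, zero_add, sub_zero]
  · field_simp
    ring
  · field_simp
    linear_combination secQ p x y * hpy + deriv (fun t => secQ p x t) y * hpx

theorem secant_map_fderiv (p : Polynomial ℝ) (hp : 2 ≤ p.natDegree) (x y : ℝ)
    (hq : secQ p x y ≠ 0) :
    HasFDerivAt (secG p)
      ((ContinuousLinearMap.snd ℝ ℝ ℝ).prod
        ((p.eval y * deriv (fun t => secQ p t y) x / (secQ p x y) ^ 2) •
            ContinuousLinearMap.fst ℝ ℝ ℝ +
          (p.eval x * deriv (fun t => secQ p x t) y / (secQ p x y) ^ 2) •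
            ContinuousLinearMap.snd ℝ ℝ ℝ))
      (x, y) :=
  secant_map_fderiv_general p x y hq
end

section
/- Let p be a real polynomial of degree k ≥ 2 and α a real root of p with p'(α) ≠ 0. Then: (i) for every real x with p(x) ≠ 0, the secant map satisfies S(x, α) = (α, α); (ii) for every real y with p(y) ≠ 0, S(α, y) = (y, α), and hence S²(α, y) = (α, α). In particular the basin of attraction of (α, α) contains the horizontal line {(x, α) : p(x) ≠ 0} and the vertical line {(α, y) : p(y) ≠ 0}, and is therefore unbounded. -/
open Polynomial Filter Topology

/-- One step of the secant method: `sec(x,y) = y − p(y)(y−x)/(p(y)−p(x))`. -/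
noncomputable def secStep (p : Polynomial ℝ) (x y : ℝ) : ℝ :=
  y - Polynomial.eval y p * (y - x) / (Polynomial.eval y p - Polynomial.eval x p)

/-- The secant map `S(x,y) = (y, sec(x,y))`. -/
noncomputable def secMap (p : Polynomial ℝ) (z : ℝ × ℝ) : ℝ × ℝ :=
  (z.2, secStep p z.1 z.2)

theorem secStep_of_eval_right_eq_zero {p : ℝ[X]} {y : ℝ} (hy : p.eval y = 0) (x : ℝ) :
    secStep p x y = y := by
  simp [secStep, hy]

/-- The secant through `(x, 0)` and `(y, p y)` meets the axis at `x`. -/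
theorem secStep_of_eval_left_eq_zero {p : ℝ[X]} {x y : ℝ} (hx : p.eval x = 0)
    (hy : p.eval y ≠ 0) : secStep p x y = x := by
  rw [secStep, hx, sub_zero, mul_div_cancel_left₀ _ hy, sub_sub_cancel]

theorem secMap_of_eval_right_eq_zero {p : ℝ[X]} {α : ℝ} (hα : p.eval α = 0) (x : ℝ) :
    secMap p (x, α) = (α, α) := by
  rw [secMap, secStep_of_eval_right_eq_zero hα]

theorem secMap_of_eval_left_eq_zero {p : ℝ[X]} {α y : ℝ} (hα : p.eval α = 0)
    (hy : p.eval y ≠ 0) : secMap p (α, y) = (y, α) := by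
  rw [secMap, secStep_of_eval_left_eq_zero hα hy]

theorem secant_basin_lines_general (p : Polynomial ℝ) (α : ℝ)
    (hroot : p.eval α = 0) :
    (∀ x : ℝ, p.eval x ≠ 0 → secMap p (x, α) = (α, α)) ∧
    (∀ y : ℝ, p.eval y ≠ 0 →
      secMap p (α, y) = (y, α) ∧ secMap p (secMap p (α, y)) = (α, α)) := by
  refine ⟨fun x _ => secMap_of_eval_right_eq_zero hroot x, fun y hy => ?_⟩
  have hstep := secMap_of_eval_left_eq_zero hroot hy
  exact ⟨hstep, hstep ▸ secMap_of_eval_right_eq_zero hroot y⟩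

theorem secant_basin_lines (p : Polynomial ℝ) (hp : 2 ≤ p.natDegree) (α : ℝ)
    (hroot : p.eval α = 0) (hsimple : p.derivative.eval α ≠ 0) :
    (∀ x : ℝ, p.eval x ≠ 0 → secMap p (x, α) = (α, α)) ∧
    (∀ y : ℝ, p.eval y ≠ 0 →
      secMap p (α, y) = (y, α) ∧ secMap p (secMap p (α, y)) = (α, α)) :=
  secant_basin_lines_general p α hroot
end

section
/- Let p be a real polynomial of degree k ≥ 2, q its associated symmetric polynomial, N(x,y) = y·q(x,y) − p(y), D(x,y) = q(x,y), and let α ≠ β be two simple real roots of p. At the focal point Q = (α, β): N_x(Q) = β·p'(α)/(α − β), N_y(Q) = −α·p'(β)/(α − β), D_x(Q) = p'(α)/(α − β), D_y(Q) = −p'(β)/(α − β), and consequently N_x(Q)·D_y(Q) − N_y(Q)·D_x(Q) = p'(α)·p'(β)/(α − β) ≠ 0. -/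
open Polynomial Filter Topology

/-- Numerator of the second component of the secant map: `N(x,y) = y*q(x,y) - p(y)`. -/
noncomputable def secN (p : Polynomial ℝ) (x y : ℝ) : ℝ :=
  y * secQ p x y - Polynomial.eval y p

/-- Denominator of the second component of the secant map: `D(x,y) = q(x,y)`. -/
noncomputable def secD (p : Polynomial ℝ) (x y : ℝ) : ℝ := secQ p x y

/-!
Off the diagonal, `q(x, y) = (p(x) - p(y)) / (x - y)`. Differentiating `q(t, y) * (t - y) = p(t) - p(y)`
gives `q_x = (p'(x) - q) / (x - y)`, and symmetrically `q_y = (q - p'(y)) / (x - y)`. At the focal point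
`q(α, β) = 0` because `p(α) = p(β)`, and the four partials of `N = y q - p(y)` and `D = q` follow.
-/

section SecQ

variable (p : Polynomial ℝ)

theorem secQ_mul_sub (x y : ℝ) : secQ p x y * (x - y) = p.eval x - p.eval y := by
  rw [secQ, Finset.sum_mul, p.eval_eq_sum_range, p.eval_eq_sum_range, ← Finset.sum_sub_distrib]
  refine Finset.sum_congr rfl fun j _ => ?_
  rw [mul_assoc, geom_sum₂_mul, mul_sub]

theorem secQ_eq_zero_of_eval_eq {x y : ℝ} (hxy : x ≠ y) (h : p.eval x = p.eval y) :
    secQ p x y = 0 := by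
  have := secQ_mul_sub p x y
  rw [h, sub_self] at this
  exact (mul_eq_zero.1 this).resolve_right (sub_ne_zero.2 hxy)

theorem differentiable_secQ_left (y : ℝ) : Differentiable ℝ (fun x => secQ p x y) := by
  unfold secQ; fun_prop

theorem differentiable_secQ_right (x : ℝ) : Differentiable ℝ (fun y => secQ p x y) := by
  unfold secQ; fun_prop

variable {p}

theorem hasDerivAt_secQ_left {x y : ℝ} (hxy : x ≠ y) :
    HasDerivAt (fun t => secQ p t y) ((p.derivative.eval x - secQ p x y) / (x - y)) x := by
  have hq := (differentiable_secQ_left p y x).hasDerivAt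
  have hprod := hq.mul ((hasDerivAt_id' x).sub_const y)
  have hpoly : HasDerivAt (fun t => secQ p t y * (t - y)) (p.derivative.eval x) x := by
    simp_rw [secQ_mul_sub]
    exact (p.hasDerivAt x).sub_const _
  suffices h : deriv (fun t => secQ p t y) x = (p.derivative.eval x - secQ p x y) / (x - y) by
    rwa [h] at hq
  have hderiv := hpoly.unique hprod
  rw [eq_div_iff (sub_ne_zero.2 hxy)]
  linarith

theorem hasDerivAt_secQ_right {x y : ℝ} (hxy : x ≠ y) :
    HasDerivAt (fun t => secQ p x t) ((secQ p x y - p.derivative.eval y) / (x - y)) y := by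
  have hq := (differentiable_secQ_right p x y).hasDerivAt
  have hprod := hq.mul ((hasDerivAt_id' y).const_sub x)
  have hpoly : HasDerivAt (fun t => secQ p x t * (x - t)) (-p.derivative.eval y) y := by
    simp_rw [secQ_mul_sub]
    exact (p.hasDerivAt y).const_sub _
  suffices h : deriv (fun t => secQ p x t) y = (secQ p x y - p.derivative.eval y) / (x - y) by
    rwa [h] at hq
  have hderiv := hpoly.unique hprod
  rw [eq_div_iff (sub_ne_zero.2 hxy)]
  linarith

theorem hasDerivAt_secN_left {x y : ℝ} (hxy : x ≠ y) :
    HasDerivAt (fun t => secN p t y) (y * ((p.derivative.eval x - secQ p x y) / (x - y))) x :=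
  ((hasDerivAt_secQ_left hxy).const_mul y).sub_const _

theorem hasDerivAt_secN_right {x y : ℝ} (hxy : x ≠ y) :
    HasDerivAt (fun t => secN p x t)
      (secQ p x y + y * ((secQ p x y - p.derivative.eval y) / (x - y)) -
        p.derivative.eval y) y :=
  (((hasDerivAt_id' y).mul (hasDerivAt_secQ_right hxy)).sub (p.hasDerivAt y)).congr_deriv
    (by rw [one_mul])

end SecQ

theorem secant_focal_partials_general (p : Polynomial ℝ) (α β : ℝ)
    (hαβ : α ≠ β) (hα : p.eval α = 0) (hβ : p.eval β = 0)
    (hα' : p.derivative.eval α ≠ 0) (hβ' : p.derivative.eval β ≠ 0) :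
    deriv (fun t => secN p t β) α = β * p.derivative.eval α / (α - β) ∧
    deriv (fun t => secN p α t) β = -α * p.derivative.eval β / (α - β) ∧
    deriv (fun t => secD p t β) α = p.derivative.eval α / (α - β) ∧
    deriv (fun t => secD p α t) β = -(p.derivative.eval β / (α - β)) ∧
    deriv (fun t => secN p t β) α * deriv (fun t => secD p α t) β -
        deriv (fun t => secN p α t) β * deriv (fun t => secD p t β) α =
      p.derivative.eval α * p.derivative.eval β / (α - β) ∧
    p.derivative.eval α * p.derivative.eval β / (α - β) ≠ 0 := by
  have hQ : secQ p α β = 0 := secQ_eq_zero_of_eval_eq p hαβ (hα.trans hβ.symm)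
  have hsub : α - β ≠ 0 := sub_ne_zero.2 hαβ
  have hNx := (hasDerivAt_secN_left (p := p) hαβ).deriv
  have hNy := (hasDerivAt_secN_right (p := p) hαβ).deriv
  have hDx := (hasDerivAt_secQ_left (p := p) hαβ).deriv
  have hDy := (hasDerivAt_secQ_right (p := p) hαβ).deriv
  simp only [secD, hNx, hNy, hDx, hDy, hQ, sub_zero, zero_sub, zero_add]
  refine ⟨by ring, by field_simp; ring, trivial, by ring, by field_simp; ring, ?_⟩
  exact div_ne_zero (mul_ne_zero hα' hβ') hsub

theorem secant_focal_partials (p : Polynomial ℝ) (hp : 2 ≤ p.natDegree) (α β : ℝ)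
    (hαβ : α ≠ β) (hα : p.eval α = 0) (hβ : p.eval β = 0)
    (hα' : p.derivative.eval α ≠ 0) (hβ' : p.derivative.eval β ≠ 0) :
    deriv (fun t => secN p t β) α = β * p.derivative.eval α / (α - β) ∧
    deriv (fun t => secN p α t) β = -α * p.derivative.eval β / (α - β) ∧
    deriv (fun t => secD p t β) α = p.derivative.eval α / (α - β) ∧
    deriv (fun t => secD p α t) β = -(p.derivative.eval β / (α - β)) ∧
    deriv (fun t => secN p t β) α * deriv (fun t => secD p α t) β -
        deriv (fun t => secN p α t) β * deriv (fun t => secD p t β) α =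
      p.derivative.eval α * p.derivative.eval β / (α - β) ∧
    p.derivative.eval α * p.derivative.eval β / (α - β) ≠ 0 :=
  secant_focal_partials_general p α β hαβ hα hβ hα' hβ'
end

section
/- Let p be a real polynomial of degree k ≥ 2. The secant map of p has no periodic orbit of minimal period three: there do not exist pairwise distinct real numbers a, b, d with p(a) ≠ p(b), p(b) ≠ p(d), p(d) ≠ p(a), such that sec(a,b) = d, sec(b,d) = a, and sec(d,a) = b, where sec(x,y) = y − p(y)(y−x)/(p(y)−p(x)). -/
open Polynomial Filter Topology

/-! `sec(x, y) = z` says that the secant through `(x, p x)` and `(y, p y)` meets the axis at `z`,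
i.e. `p(x) (z - y) = p(y) (z - x)`. For a 3-cycle `a → b → d → a` the product of the three
relations gives `A B D Δ = - A B D Δ`, with `A, B, D` the values of `p` and `Δ ≠ 0` the product of
the differences of the points, so one value vanishes; each relation then passes the zero on to
the next value, so `A = B = D = 0`, contradicting `p(a) ≠ p(b)`. -/

theorem secStep_eq_iff {p : ℝ[X]} {x y z : ℝ} (hxy : p.eval x ≠ p.eval y) :
    secStep p x y = z ↔ p.eval x * (z - y) = p.eval y * (z - x) := by
  have h : p.eval y - p.eval x ≠ 0 := sub_ne_zero.mpr hxy.symm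
  rw [secStep, sub_eq_iff_eq_add, ← sub_eq_iff_eq_add', eq_div_iff h]
  constructor <;> intro h' <;> linear_combination h'

theorem eq_zero_of_secant_cycle_relations {R : Type*} [CommRing R] [IsDomain R] [NeZero (2 : R)]
    {a b d A B D : R} (hab : a ≠ b) (hbd : b ≠ d) (hda : d ≠ a)
    (h₁ : A * (d - b) = B * (d - a)) (h₂ : B * (a - d) = D * (a - b))
    (h₃ : D * (b - a) = A * (b - d)) :
    A = 0 ∧ B = 0 ∧ D = 0 := by
  have hΔ : (d - b) * (a - d) * (b - a) ≠ 0 := by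
    simp only [ne_eq, mul_eq_zero, sub_eq_zero, not_or]
    exact ⟨⟨hbd.symm, hda.symm⟩, hab.symm⟩
  have hABD : A * B * D = 0 := by
    have h : (2 : R) * (A * B * D * ((d - b) * (a - d) * (b - a))) = 0 := by
      linear_combination (B * (a - d) * (D * (b - a))) * h₁ + (B * (d - a) * (D * (b - a))) * h₂
        + (B * (d - a) * (D * (a - b))) * h₃
    simpa [NeZero.ne, hΔ] using h
  have next : ∀ {u v s t : R}, u * s = v * t → t ≠ 0 → u = 0 → v = 0 := by
    intro u v s t h ht hu
    simpa [hu, ht] using h.symm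
  have hB_of_A := next h₁ (sub_ne_zero.mpr hda)
  have hD_of_B := next h₂ (sub_ne_zero.mpr hab)
  have hA_of_D := next h₃ (sub_ne_zero.mpr hbd)
  obtain hA | hB | hD : A = 0 ∨ B = 0 ∨ D = 0 := by simpa [or_assoc] using hABD
  · exact ⟨hA, hB_of_A hA, hD_of_B (hB_of_A hA)⟩
  · exact ⟨hA_of_D (hD_of_B hB), hB, hD_of_B hB⟩
  · exact ⟨hA_of_D hD, hB_of_A (hA_of_D hD), hD⟩

theorem secant_no_period_three_general (p : Polynomial ℝ) :
    ¬ ∃ a b d : ℝ, a ≠ b ∧ b ≠ d ∧ d ≠ a ∧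
      p.eval a ≠ p.eval b ∧ p.eval b ≠ p.eval d ∧ p.eval d ≠ p.eval a ∧
      secStep p a b = d ∧ secStep p b d = a ∧ secStep p d a = b := by
  rintro ⟨a, b, d, hab, hbd, hda, hAB, hBD, hDA, h₁, h₂, h₃⟩
  rw [secStep_eq_iff hAB] at h₁
  rw [secStep_eq_iff hBD] at h₂
  rw [secStep_eq_iff hDA] at h₃
  obtain ⟨hA, hB, -⟩ := eq_zero_of_secant_cycle_relations hab hbd hda h₁ h₂ h₃
  exact hAB (hA.trans hB.symm)

theorem secant_no_period_three (p : Polynomial ℝ) (hp : 2 ≤ p.natDegree) :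
    ¬ ∃ a b d : ℝ, a ≠ b ∧ b ≠ d ∧ d ≠ a ∧
      p.eval a ≠ p.eval b ∧ p.eval b ≠ p.eval d ∧ p.eval d ≠ p.eval a ∧
      secStep p a b = d ∧ secStep p b d = a ∧ secStep p d a = b :=
  secant_no_period_three_general p
end

section
/- Let p be a real polynomial of degree k ≥ 2 and let x₀ ∈ ℝ be a critical point of p that is not a root: p'(x₀) = 0 and p(x₀) ≠ 0. Then the second component of the secant map blows up at (x₀, x₀): the function (x,y) ↦ |y·q(x,y) − p(y)| / |q(x,y)| tends to +∞ as (x,y) → (x₀, x₀) within the set {(x,y) : q(x,y) ≠ 0}, where q is the symmetric polynomial with p(x) − p(y) = (x−y)q(x,y). (This is the first step of the period-three cycle (x₀,x₀) ↦ (x₀,∞) ↦ (∞,x₀) ↦ (x₀,x₀) of the secant map extended to the punctured torus.) -/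
open Polynomial Filter Topology

lemma secQ_self (p : Polynomial ℝ) (x : ℝ) : secQ p x x = p.derivative.eval x := by
  rw [derivative_eval, p.sum_over_range (by simp)]
  unfold secQ
  refine Finset.sum_congr rfl fun j _ => ?_
  have : ∑ i ∈ Finset.range j, x ^ i * x ^ (j - 1 - i)
      = ∑ i ∈ Finset.range j, x ^ (j - 1) := by
    refine Finset.sum_congr rfl fun i hi => ?_
    rw [Finset.mem_range] at hi
    rw [← pow_add]
    congr 1
    omega
  rw [this, Finset.sum_const, Finset.card_range, nsmul_eq_mul]; ring

lemma secQ_continuous (p : Polynomial ℝ) :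
    Continuous (fun z : ℝ × ℝ => secQ p z.1 z.2) := by
  unfold secQ
  exact continuous_finset_sum _ fun j _ => continuous_const.mul <|
    continuous_finset_sum _ fun i _ => ((continuous_fst.pow i).mul (continuous_snd.pow _))

theorem secant_blow_up_at_critical (p : Polynomial ℝ) (hp : 2 ≤ p.natDegree) (x₀ : ℝ)
    (hcrit : p.derivative.eval x₀ = 0) (hne : p.eval x₀ ≠ 0) :
    Tendsto (fun z : ℝ × ℝ => |z.2 * secQ p z.1 z.2 - p.eval z.2| / |secQ p z.1 z.2|)
      (𝓝[{z : ℝ × ℝ | secQ p z.1 z.2 ≠ 0}] (x₀, x₀)) atTop := by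
  have hq0 : secQ p x₀ x₀ = 0 := by rw [secQ_self]; exact hcrit
  -- numerator tends to |p x₀| > 0
  have hnum : Tendsto (fun z : ℝ × ℝ => |z.2 * secQ p z.1 z.2 - p.eval z.2|)
      (𝓝[{z : ℝ × ℝ | secQ p z.1 z.2 ≠ 0}] (x₀, x₀)) (𝓝 |x₀ * secQ p x₀ x₀ - p.eval x₀|) := by
    apply Tendsto.mono_left _ nhdsWithin_le_nhds
    exact ((continuous_snd.mul (secQ_continuous p)).sub
      ((p.continuous_aeval).comp continuous_snd)).abs.tendsto _
  have hden : Tendsto (fun z : ℝ × ℝ => |secQ p z.1 z.2|)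
      (𝓝[{z : ℝ × ℝ | secQ p z.1 z.2 ≠ 0}] (x₀, x₀)) (𝓝[>] 0) := by
    apply tendsto_nhdsWithin_of_tendsto_nhds_of_eventually_within
    · have := ((secQ_continuous p).abs.tendsto (x₀, x₀)).mono_left
        (nhdsWithin_le_nhds (s := {z : ℝ × ℝ | secQ p z.1 z.2 ≠ 0}))
      simpa [hq0] using this
    · filter_upwards [self_mem_nhdsWithin] with z hz
      exact abs_pos.mpr hz
  have hinv : Tendsto (fun z : ℝ × ℝ => |secQ p z.1 z.2|⁻¹)
      (𝓝[{z : ℝ × ℝ | secQ p z.1 z.2 ≠ 0}] (x₀, x₀)) atTop :=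
    tendsto_inv_nhdsGT_zero.comp hden
  have hpos : 0 < |x₀ * secQ p x₀ x₀ - p.eval x₀| := by
    rw [hq0]; simpa using abs_pos.mpr (neg_ne_zero.mpr hne)
  simpa [div_eq_mul_inv] using hnum.pos_mul_atTop hpos hinv
end
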